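/- Let G=(V,A) be a directed graph with integer arc capacities all equal to 1, and suppose the maximum s-t flow value equals k. Then there exist k pairwise arc-disjoint simple s-t paths in G (Menger's theorem, flow-decomposition form). -/

import Mathlib

open Finset

variable {V : Type}

/-- The arcs (consecutive vertex pairs) of a path given as a vertex list. -/
def arcs (p : List V) : List (V × V) := p.zip p.tail

/-- `p` is a simple directed `s`-`t` path using only arcs of `E`. -/
def IsPath [DecidableEq V] (E : Finset (V × V)) (s t : V) (p : List V) : Prop :=
  p.head? = some s ∧ p.getLast? = some t ∧ p.Nodup ∧ ∀ a ∈ arcs p, a ∈ E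

/-- The bottleneck (minimum capacity) of a path. -/
noncomputable def mincap (b : V × V → ℝ) (p : List V) : ℝ :=
  sInf (b '' {a | a ∈ arcs p})

/-- `f` is a feasible `s`-`t` flow on the arc set `E` with capacities `b`. -/
structure IsFlow [Fintype V] (E : Finset (V × V)) (b : V × V → ℝ) (s t : V)
    (f : V × V → ℝ) : Prop where
  nonneg : ∀ a, 0 ≤ f a
  support : ∀ a, a ∉ E → f a = 0
  cap : ∀ a ∈ E, f a ≤ b a
  conserve : ∀ v, v ≠ s → v ≠ t → (∑ u, f (u, v)) = (∑ u, f (v, u))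

/-- The value of a flow: net outflow at the source `s`. -/
noncomputable def flowValue [Fintype V] (s : V) (f : V × V → ℝ) : ℝ :=
  (∑ u, f (s, u)) - (∑ u, f (u, s))

/-- The maximum `s`-`t` flow value on arc set `E` with capacities `b`. -/
noncomputable def maxFlow [Fintype V] (E : Finset (V × V)) (b : V × V → ℝ) (s t : V) : ℝ :=
  sSup {x | ∃ f, IsFlow E b s t f ∧ flowValue s f = x}

/-- The arcs used by a (finite) set of paths. -/
def inducedArcs [DecidableEq V] (P : Finset (List V)) : Finset (V × V) :=
  P.biUnion fun p => (arcs p).toFinset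

/-- The arcs used by a family of `k` paths (repetitions allowed). -/
def inducedArcsFam [DecidableEq V] {k : ℕ} (P : Fin k → List V) : Finset (V × V) :=
  Finset.univ.biUnion fun i => (arcs (P i)).toFinset

/-- The paths in `P` are pairwise arc-disjoint. -/
def ArcDisjoint (P : Finset (List V)) : Prop :=
  ∀ p ∈ P, ∀ q ∈ P, p ≠ q → ∀ a, a ∈ arcs p → a ∉ arcs q

/-- Worst residual max-flow: minimum over single-arc failures `a ∈ Fail` of the
max-flow on `E` with `a` removed. -/
noncomputable def worstFlow [Fintype V] [DecidableEq V] (Fail E : Finset (V × V))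
    (b : V × V → ℝ) (s t : V) : ℝ :=
  sInf {x | ∃ a ∈ Fail, maxFlow (E.erase a) b s t = x}

/-- The arc set `S` contains a directed cycle. -/
def HasCycle [DecidableEq V] (S : Finset (V × V)) : Prop :=
  ∃ p : List V, 2 ≤ p.length ∧ p.head? = p.getLast? ∧ (p.drop 1).Nodup ∧
    ∀ a ∈ arcs p, a ∈ S

set_option linter.unusedSectionVars false
set_option linter.unnecessarySimpa false
set_option linter.unusedVariables false
set_option maxHeartbeats 1000000

theorem arcs_nil : arcs ([] : List V) = [] := rfl
theorem arcs_single (a : V) : arcs [a] = [] := rfl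
theorem arcs_cons (a b : V) (l : List V) : arcs (a :: b :: l) = (a, b) :: arcs (b :: l) := rfl

theorem map_fst_arcs (p : List V) : (arcs p).map Prod.fst = p.dropLast := by
  induction p with
  | nil => rfl
  | cons a l ih =>
    cases l with
    | nil => rfl
    | cons b m => simpa [arcs_cons, List.dropLast] using ih

theorem map_snd_arcs (p : List V) : (arcs p).map Prod.snd = p.tail := by
  induction p with
  | nil => rfl
  | cons a l ih =>
    cases l with
    | nil => rfl
    | cons b m => simpa [arcs_cons] using ih

theorem mem_arcs_cons {a : V × V} {x : V} {l : List V} (h : a ∈ arcs l) : a ∈ arcs (x :: l) := by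
  cases l with
  | nil => simp [arcs_nil] at h
  | cons b m => rw [arcs_cons]; exact List.mem_cons_of_mem _ h

theorem mem_arcs_append_right {a : V × V} (l : List V) {q : List V} (h : a ∈ arcs q) :
    a ∈ arcs (l ++ q) := by
  induction l with
  | nil => simpa using h
  | cons x m ih => exact mem_arcs_cons ih

theorem mem_arcs_append_cons {a : V × V} (l : List V) (x : V) (l2 : List V)
    (h : a ∈ arcs (l ++ [x])) : a ∈ arcs (l ++ x :: l2) := by
  induction l with
  | nil => simp [arcs_single] at h
  | cons y m ih =>
    cases m with
    | nil =>
      have ha : a = (y, x) := by simpa [arcs] using h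
      subst ha
      show (y, x) ∈ arcs (y :: x :: l2)
      rw [arcs_cons]
      exact List.mem_cons_self
    | cons z m' =>
      rw [List.cons_append, List.cons_append, arcs_cons] at h ⊢
      rcases List.mem_cons.1 h with h | h
      · rw [h]; exact List.mem_cons_self
      · exact List.mem_cons_of_mem _ (ih h)

theorem arcs_concat : ∀ (p : List V) (v u : V), p.getLast? = some v →
    arcs (p ++ [u]) = arcs p ++ [(v, u)] := by
  intro p
  induction p with
  | nil => intro v u h; simp at h
  | cons a l ih =>
    intro v u h
    cases l with
    | nil =>
      simp at h
      subst h
      rfl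
    | cons b m =>
      rw [List.getLast?_cons_cons] at h
      rw [List.cons_append, List.cons_append, arcs_cons]
      rw [show (a :: b :: m) = a :: (b :: m) from rfl, arcs_cons]
      rw [← List.cons_append, ih v u h]
      rfl

theorem arcs_nodup {p : List V} (h : p.Nodup) : (arcs p).Nodup := by
  have h1 : p.dropLast.Nodup := h.sublist (List.dropLast_sublist p)
  rw [← map_fst_arcs] at h1
  exact h1.of_map _

theorem countP_fst_arcs (p : List V) (P : V → Bool) :
    (arcs p).countP (fun a => P a.1) = p.dropLast.countP P := by
  rw [← map_fst_arcs, List.countP_map]; rfl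

theorem countP_snd_arcs (p : List V) (P : V → Bool) :
    (arcs p).countP (fun a => P a.2) = p.tail.countP P := by
  rw [← map_snd_arcs, List.countP_map]; rfl

theorem countP_eq_tail {p : List V} (P : V → Bool) {x : V} (hh : p.head? = some x) :
    p.countP P = p.tail.countP P + if P x then 1 else 0 := by
  rcases p with _ | ⟨a, l⟩
  · simp at hh
  · obtain rfl : a = x := by simpa using hh
    simp [List.countP_cons]

theorem countP_eq_dropLast {p : List V} (P : V → Bool) {y : V} (hl : p.getLast? = some y) :
    p.countP P = p.dropLast.countP P + if P y then 1 else 0 := by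
  rcases List.eq_nil_or_concat p with rfl | ⟨l', z, rfl⟩
  · simp at hl
  · rw [List.concat_eq_append] at *
    rw [List.getLast?_concat] at hl
    obtain rfl : z = y := by simpa using hl
    rw [List.dropLast_concat, List.countP_append]
    simp [List.countP_cons]

/-- tail count minus dropLast count -/
theorem countP_tail_sub_dropLast (p : List V) (P : V → Bool) {x y : V}
    (hh : p.head? = some x) (hl : p.getLast? = some y) :
    (p.tail.countP P : ℤ) - p.dropLast.countP P
      = (if P y then 1 else 0) - (if P x then 1 else 0) := by
  have h1 := countP_eq_tail P hh
  have h2 := countP_eq_dropLast P hl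
  by_cases hx : P x <;> by_cases hy : P y <;> simp [hx, hy] at * <;> omega

section Deg
variable [DecidableEq V]

/-- out-degree of `v` in arc set `F`. -/
def outd (F : Finset (V × V)) (v : V) : ℕ := (F.filter (fun a => a.1 = v)).card
/-- in-degree of `v` in arc set `F`. -/
def ind (F : Finset (V × V)) (v : V) : ℕ := (F.filter (fun a => a.2 = v)).card

/-- conservation at all internal vertices -/
def Conserv (F : Finset (V × V)) (s t : V) : Prop :=
  ∀ v, v ≠ s → v ≠ t → ind F v = outd F v

/-- the (integer) value of the 0/1-flow given by arc set `F`. -/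
def valF (F : Finset (V × V)) (s : V) : ℤ := (outd F s : ℤ) - ind F s

theorem outd_mono {F G : Finset (V × V)} (h : F ⊆ G) (v : V) : outd F v ≤ outd G v :=
  Finset.card_le_card (Finset.filter_subset_filter _ h)

theorem ind_mono {F G : Finset (V × V)} (h : F ⊆ G) (v : V) : ind F v ≤ ind G v :=
  Finset.card_le_card (Finset.filter_subset_filter _ h)

theorem outd_sdiff {F T : Finset (V × V)} (h : T ⊆ F) (v : V) :
    outd (F \ T) v = outd F v - outd T v := by
  unfold outd
  rw [show (F \ T).filter (fun a => a.1 = v) = F.filter (fun a => a.1 = v) \ T.filter (fun a => a.1 = v) by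
    ext a; simp [Finset.mem_sdiff, Finset.mem_filter]; tauto]
  exact Finset.card_sdiff_of_subset (Finset.filter_subset_filter _ h)

theorem ind_sdiff {F T : Finset (V × V)} (h : T ⊆ F) (v : V) :
    ind (F \ T) v = ind F v - ind T v := by
  unfold ind
  rw [show (F \ T).filter (fun a => a.2 = v) = F.filter (fun a => a.2 = v) \ T.filter (fun a => a.2 = v) by
    ext a; simp [Finset.mem_sdiff, Finset.mem_filter]; tauto]
  exact Finset.card_sdiff_of_subset (Finset.filter_subset_filter _ h)

theorem outd_union {F G : Finset (V × V)} (h : Disjoint F G) (v : V) :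
    outd (F ∪ G) v = outd F v + outd G v := by
  unfold outd
  rw [Finset.filter_union]
  exact Finset.card_union_of_disjoint
    (Finset.disjoint_filter_filter h)

theorem ind_union {F G : Finset (V × V)} (h : Disjoint F G) (v : V) :
    ind (F ∪ G) v = ind F v + ind G v := by
  unfold ind
  rw [Finset.filter_union]
  exact Finset.card_union_of_disjoint
    (Finset.disjoint_filter_filter h)

theorem outd_toFinset {L : List (V × V)} (h : L.Nodup) (v : V) :
    outd L.toFinset v = L.countP (fun a => a.1 = v) := by
  unfold outd
  rw [show L.toFinset.filter (fun a => a.1 = v) = (L.filter (fun a => a.1 = v)).toFinset by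
    ext a; simp [List.mem_filter]]
  rw [List.card_toFinset, (h.filter _).dedup, List.countP_eq_length_filter]

theorem ind_toFinset {L : List (V × V)} (h : L.Nodup) (v : V) :
    ind L.toFinset v = L.countP (fun a => a.2 = v) := by
  unfold ind
  rw [show L.toFinset.filter (fun a => a.2 = v) = (L.filter (fun a => a.2 = v)).toFinset by
    ext a; simp [List.mem_filter]]
  rw [List.card_toFinset, (h.filter _).dedup, List.countP_eq_length_filter]

/-- swap image exchanges in/out degrees -/
theorem outd_image_swap (D : Finset (V × V)) (v : V) :
    outd (D.image Prod.swap) v = ind D v := by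
  unfold outd ind
  rw [show (D.image Prod.swap).filter (fun a => a.1 = v)
      = (D.filter (fun a => a.2 = v)).image Prod.swap by
    ext a
    simp only [Finset.mem_filter, Finset.mem_image]
    constructor
    · rintro ⟨⟨b, hb, rfl⟩, h2⟩; exact ⟨b, ⟨hb, h2⟩, rfl⟩
    · rintro ⟨b, ⟨hb, h2⟩, rfl⟩; exact ⟨⟨b, hb, rfl⟩, h2⟩]
  exact Finset.card_image_of_injective _ Prod.swap_injective

theorem ind_image_swap (D : Finset (V × V)) (v : V) :
    ind (D.image Prod.swap) v = outd D v := by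
  unfold outd ind
  rw [show (D.image Prod.swap).filter (fun a => a.2 = v)
      = (D.filter (fun a => a.1 = v)).image Prod.swap by
    ext a
    simp only [Finset.mem_filter, Finset.mem_image]
    constructor
    · rintro ⟨⟨b, hb, rfl⟩, h2⟩; exact ⟨b, ⟨hb, h2⟩, rfl⟩
    · rintro ⟨b, ⟨hb, h2⟩, rfl⟩; exact ⟨⟨b, hb, rfl⟩, h2⟩]
  exact Finset.card_image_of_injective _ Prod.swap_injective

end Deg

section Flows
variable [Fintype V] [DecidableEq V]

/-- the 0/1 flow associated with an arc set -/
def flowOf (F : Finset (V × V)) : V × V → ℝ := fun a => if a ∈ F then 1 else 0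

theorem sum_flowOf_out (F : Finset (V × V)) (v : V) :
    (∑ u, flowOf F (v, u)) = (outd F v : ℝ) := by
  unfold flowOf outd
  rw [Finset.sum_boole]
  congr 1
  apply Finset.card_nbij (fun u => (v, u))
  · intro u hu
    simp only [Finset.mem_coe, Finset.mem_filter, Finset.mem_univ, true_and] at hu ⊢
    exact ⟨hu, trivial⟩
  · intro u _ w _ h
    simpa using h
  · intro a ha
    simp only [Finset.coe_filter, Set.mem_setOf_eq, Finset.mem_univ, true_and] at ha
    obtain ⟨ha1, ha2⟩ := ha
    have hva : (v, a.2) = a := by rw [← ha2]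
    exact ⟨a.2, by simp [hva, ha1], hva⟩

theorem sum_flowOf_in (F : Finset (V × V)) (v : V) :
    (∑ u, flowOf F (u, v)) = (ind F v : ℝ) := by
  unfold flowOf ind
  rw [Finset.sum_boole]
  congr 1
  apply Finset.card_nbij (fun u => (u, v))
  · intro u hu
    simp only [Finset.mem_coe, Finset.mem_filter, Finset.mem_univ, true_and] at hu ⊢
    exact ⟨hu, trivial⟩
  · intro u _ w _ h
    simpa using h
  · intro a ha
    simp only [Finset.coe_filter, Set.mem_setOf_eq, Finset.mem_univ, true_and] at ha
    obtain ⟨ha1, ha2⟩ := ha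
    have hva : (a.1, v) = a := by rw [← ha2]
    exact ⟨a.1, by simp [hva, ha1], hva⟩

theorem isFlow_flowOf {A : Finset (V × V)} {b : V × V → ℝ} (hb : ∀ a ∈ A, b a = 1)
    {s t : V} {F : Finset (V × V)} (hFA : F ⊆ A) (hC : Conserv F s t) :
    IsFlow A b s t (flowOf F) := by
  refine ⟨?_, ?_, ?_, ?_⟩
  · intro a; unfold flowOf; split <;> norm_num
  · intro a ha; unfold flowOf; rw [if_neg (fun h => ha (hFA h))]
  · intro a ha; rw [hb a ha]; unfold flowOf; split <;> norm_num
  · intro v hvs hvt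
    rw [sum_flowOf_out, sum_flowOf_in, hC v hvs hvt]

theorem flowValue_flowOf {s : V} (F : Finset (V × V)) :
    flowValue s (flowOf F) = (valF F s : ℝ) := by
  unfold flowValue valF
  rw [sum_flowOf_out, sum_flowOf_in]
  push_cast
  ring

end Flows

/-- loop erasure -/
theorem simplify_aux : ∀ (n : ℕ) (p : List V), p.length ≤ n → p ≠ [] →
    ∃ q : List V, q ≠ [] ∧ q.head? = p.head? ∧
    q.getLast? = p.getLast? ∧ q.Nodup ∧ (∀ x ∈ q, x ∈ p) ∧ ∀ a ∈ arcs q, a ∈ arcs p := by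
  intro n
  induction n with
  | zero =>
    intro p hlen hne
    rcases p with _ | _
    · exact absurd rfl hne
    · simp at hlen
  | succ n ih =>
    intro p hlen hne
    rcases p with _ | ⟨v, rest⟩
    · exact absurd rfl hne
    rcases rest with _ | ⟨w, rest'⟩
    · exact ⟨[v], by simp, rfl, rfl, by simp, by simp, by simp [arcs_single]⟩
    set r := w :: rest' with hr
    by_cases hv : v ∈ r
    · -- v repeats: cut out the loop
      obtain ⟨y, z, hyz⟩ := List.append_of_mem hv
      have hlen2 : (v :: z).length ≤ n := by
        have : r.length = y.length + 1 + z.length := by rw [hyz]; simp; omega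
        simp only [List.length_cons] at hlen ⊢
        omega
      have hne2 : (v :: z) ≠ [] := by simp
      obtain ⟨q, hq0, hq1, hq2, hq3, hq4, hq5⟩ := ih (v :: z) hlen2 hne2
      have harcsub : ∀ a ∈ arcs (v :: z), a ∈ arcs (v :: r) := by
        intro a ha
        rw [hyz, show (v :: (y ++ v :: z)) = (v :: y) ++ v :: z from by simp]
        exact mem_arcs_append_right (v :: y) ha
      have hlast : (v :: z).getLast? = (v :: r).getLast? := by
        rw [hyz, show (v :: (y ++ v :: z)) = (v :: y) ++ (v :: z) from by simp]
        rw [List.getLast?_append_of_ne_nil _ (by simp)]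
      refine ⟨q, hq0, by rw [hq1]; rfl, by rw [hq2, hlast], hq3, ?_, ?_⟩
      · intro x hx
        have := hq4 x hx
        rcases List.mem_cons.1 this with rfl | hxz
        · exact List.mem_cons_self
        · rw [hyz]
          exact List.mem_cons_of_mem _ (by simp [hxz])
      · intro a ha
        exact harcsub a (hq5 a ha)
    · -- v does not repeat
      have hlen2 : r.length ≤ n := by simp only [List.length_cons] at hlen; omega
      obtain ⟨q, hq0, hq1, hq2, hq3, hq4, hq5⟩ := ih r hlen2 (by simp [hr])
      refine ⟨v :: q, by simp, rfl, ?_, ?_, ?_, ?_⟩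
      · rw [show (v :: q) = [v] ++ q from rfl, List.getLast?_append_of_ne_nil _ hq0,
          show (v :: r) = [v] ++ r from rfl, List.getLast?_append_of_ne_nil _ (by simp [hr])]
        exact hq2
      · exact List.nodup_cons.2 ⟨fun hvq => hv (hq4 v hvq), hq3⟩
      · intro x hx
        rcases List.mem_cons.1 hx with rfl | hxq
        · exact List.mem_cons_self
        · exact List.mem_cons_of_mem _ (hq4 x hxq)
      · intro a ha
        rcases q with _ | ⟨q0, qrest⟩
        · exact absurd rfl hq0
        rw [arcs_cons] at ha
        rcases List.mem_cons.1 ha with rfl | ha'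
        · have : q0 = w := by simpa [hr] using hq1
          subst this
          rw [arcs_cons]
          exact List.mem_cons_self
        · exact mem_arcs_cons (hq5 _ ha')

theorem simplify (p : List V) (hne : p ≠ []) : ∃ q : List V, q ≠ [] ∧ q.head? = p.head? ∧
    q.getLast? = p.getLast? ∧ q.Nodup ∧ (∀ x ∈ q, x ∈ p) ∧ ∀ a ∈ arcs q, a ∈ arcs p :=
  simplify_aux p.length p le_rfl hne

section Reach
variable [DecidableEq V]

/-- reachability by a simple path whose arcs lie in `R` -/
def Reach (R : Finset (V × V)) (s v : V) : Prop :=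
  ∃ p : List V, p.head? = some s ∧ p.getLast? = some v ∧ p.Nodup ∧ ∀ a ∈ arcs p, a ∈ R

theorem reach_self (R : Finset (V × V)) (s : V) : Reach R s s :=
  ⟨[s], rfl, rfl, by simp, by simp [arcs_single]⟩

theorem reach_of_mem {R : Finset (V × V)} {s x : V} {p : List V}
    (hh : p.head? = some s) (hnd : p.Nodup) (hsub : ∀ a ∈ arcs p, a ∈ R)
    (hx : x ∈ p) : Reach R s x := by
  obtain ⟨l1, l2, rfl⟩ := List.append_of_mem hx
  refine ⟨l1 ++ [x], ?_, ?_, ?_, ?_⟩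
  · rw [← hh]
    rcases l1 with _ | ⟨a, m⟩
    · rfl
    · rfl
  · rw [List.getLast?_concat]
  · exact (hnd.sublist (by simpa using (l1 ++ [x]).sublist_append_left l2))
  · intro a ha
    exact hsub a (by simpa using mem_arcs_append_cons l1 x l2 ha)

theorem reach_step {R : Finset (V × V)} {s u w : V} (h : Reach R s u) (ha : (u, w) ∈ R) :
    Reach R s w := by
  by_cases hw : Reach R s w
  · exact hw
  obtain ⟨p, hh, hl, hnd, hsub⟩ := h
  have hwp : w ∉ p := fun hmem => hw (reach_of_mem hh hnd hsub hmem)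
  have hpne : p ≠ [] := by rintro rfl; simp at hh
  refine ⟨p ++ [w], ?_, List.getLast?_concat, ?_, ?_⟩
  · rw [← hh]
    rcases p with _ | ⟨a, m⟩
    · simp at hh
    · rfl
  · simpa [List.nodup_append] using ⟨hnd, fun a ha h => hwp (h ▸ ha)⟩
  · intro a haa
    rw [arcs_concat p u w (by simpa using hl)] at haa
    rcases List.mem_append.1 haa with h1 | h1
    · exact hsub a h1
    · simp at h1
      subst h1
      exact ha

end Reach

section Trail
variable [DecidableEq V]

theorem exists_unused {F : Finset (V × V)} {s t v : V} {p : List V}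
    (hC : Conserv F s t) (hval : 1 ≤ valF F s) (hh : p.head? = some s)
    (hl : p.getLast? = some v) (hvt : v ≠ t) (hnd : (arcs p).Nodup)
    (hsub : ∀ a ∈ arcs p, a ∈ F) :
    ∃ u, (v, u) ∈ F ∧ (v, u) ∉ arcs p := by
  set T := (arcs p).toFinset with hT
  have hTF : T ⊆ F := fun a ha => hsub a (List.mem_toFinset.1 ha)
  have hdiff : (ind T v : ℤ) - outd T v = 1 - (if s = v then 1 else 0) := by
    rw [hT, ind_toFinset hnd v, outd_toFinset hnd v,
      countP_snd_arcs p (fun x => x = v), countP_fst_arcs p (fun x => x = v),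
      countP_tail_sub_dropLast p _ hh hl]
    simp [eq_comm]
  have hlt : outd T v < outd F v := by
    unfold valF at hval
    by_cases hsv : s = v
    · subst hsv
      rw [if_pos rfl] at hdiff
      have h2 : ind T s ≤ ind F s := ind_mono hTF s
      omega
    · rw [if_neg hsv] at hdiff
      have h2 : ind T v ≤ ind F v := ind_mono hTF v
      have h3 : ind F v = outd F v := hC v (fun h => hsv h.symm) hvt
      omega
  have hns : ¬ (F.filter (fun a => a.1 = v) ⊆ T.filter (fun a => a.1 = v)) := by
    intro hsub2
    exact absurd (Finset.card_le_card hsub2) (by unfold outd at hlt; omega)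
  obtain ⟨a, haF, haT⟩ := Finset.not_subset.1 hns
  rw [Finset.mem_filter] at haF
  have hva : (v, a.2) = a := by rw [← haF.2]
  refine ⟨a.2, by rw [hva]; exact haF.1, fun hmem => haT ?_⟩
  rw [Finset.mem_filter]
  exact ⟨by rw [hT]; exact List.mem_toFinset.2 (hva ▸ hmem), haF.2⟩

theorem exists_trail {F : Finset (V × V)} {s t : V} (hst : s ≠ t)
    (hC : Conserv F s t) (hval : 1 ≤ valF F s) :
    ∃ p : List V, p.head? = some s ∧ p.getLast? = some t ∧ (arcs p).Nodup ∧
      ∀ a ∈ arcs p, a ∈ F := by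
  suffices H : ∀ (n : ℕ) (p : List V), F.card ≤ (arcs p).length + n →
      p.head? = some s → (arcs p).Nodup → (∀ a ∈ arcs p, a ∈ F) →
      ∃ q : List V, q.head? = some s ∧ q.getLast? = some t ∧ (arcs q).Nodup ∧
        ∀ a ∈ arcs q, a ∈ F by
    exact H F.card [s] (by simp [arcs_single]) rfl (by simp [arcs_single]) (by simp [arcs_single])
  intro n
  induction n with
  | zero =>
    intro p hlen hh hnd hsub
    -- the trail must already end at t, else we could extend, contradicting the card bound
    have hpne : p ≠ [] := by rintro rfl; simp at hh
    obtain ⟨v, hv⟩ : ∃ v, p.getLast? = some v := by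
      rcases List.eq_nil_or_concat p with rfl | ⟨l, c, rfl⟩
      · simp at hh
      · exact ⟨c, by rw [List.concat_eq_append, List.getLast?_concat]⟩
    by_cases hvt : v = t
    · exact ⟨p, hh, hvt ▸ hv, hnd, hsub⟩
    · obtain ⟨u, huF, hup⟩ := exists_unused hC hval hh hv hvt hnd hsub
      exfalso
      have hcard : ((v, u) :: arcs p).toFinset.card ≤ F.card := by
        apply Finset.card_le_card
        intro a ha
        rcases List.mem_cons.1 (List.mem_toFinset.1 ha) with rfl | h
        · exact huF
        · exact hsub _ h
      rw [List.toFinset_cons, Finset.card_insert_of_notMem (by simpa using hup),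
        List.card_toFinset, hnd.dedup] at hcard
      omega
  | succ n ih =>
    intro p hlen hh hnd hsub
    have hpne : p ≠ [] := by rintro rfl; simp at hh
    obtain ⟨v, hv⟩ : ∃ v, p.getLast? = some v := by
      rcases List.eq_nil_or_concat p with rfl | ⟨l, c, rfl⟩
      · simp at hh
      · exact ⟨c, by rw [List.concat_eq_append, List.getLast?_concat]⟩
    by_cases hvt : v = t
    · exact ⟨p, hh, hvt ▸ hv, hnd, hsub⟩
    · obtain ⟨u, huF, hup⟩ := exists_unused hC hval hh hv hvt hnd hsub
      have harcs : arcs (p ++ [u]) = arcs p ++ [(v, u)] := arcs_concat p v u hv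
      apply ih (p ++ [u])
      · rw [harcs]; simp only [List.length_append, List.length_cons, List.length_nil]; omega
      · rw [← hh]
        rcases p with _ | ⟨a, m⟩
        · simp at hh
        · rfl
      · rw [harcs]
        simpa [List.nodup_append] using ⟨hnd, fun a b hab ha hb => by subst ha hb; exact hup hab⟩
      · intro a ha
        rw [harcs] at ha
        rcases List.mem_append.1 ha with h | h
        · exact hsub a h
        · simp at h; subst h; exact huF

end Trail

section Decomp
variable [DecidableEq V]

theorem decomp {s t : V} (hst : s ≠ t) :
    ∀ (k : ℕ) (F : Finset (V × V)), Conserv F s t → valF F s = k →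
    ∃ P : Finset (List V), P.card = k ∧ ArcDisjoint P ∧
      ∀ p ∈ P, p.head? = some s ∧ p.getLast? = some t ∧ p.Nodup ∧ ∀ a ∈ arcs p, a ∈ F := by
  intro k
  induction k with
  | zero =>
    intro F _ _
    refine ⟨∅, by simp, ?_, by simp⟩
    intro p hp
    simp at hp
  | succ k ih =>
    intro F hC hval
    obtain ⟨p, hh, hl, hnd, hsub⟩ := exists_trail hst hC (by rw [hval]; omega)
    have hpne : p ≠ [] := by rintro rfl; simp at hh
    obtain ⟨q, hq0, hq1, hq2, hq3, hq4, hq5⟩ := simplify p hpne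
    set T := (arcs p).toFinset with hT
    have hTF : T ⊆ F := fun a ha => hsub a (List.mem_toFinset.1 ha)
    have key : ∀ v, (ind T v : ℤ) - outd T v
        = (if t = v then 1 else 0) - (if s = v then 1 else 0) := by
      intro v
      rw [hT, ind_toFinset hnd v, outd_toFinset hnd v,
        countP_snd_arcs p (fun x => x = v), countP_fst_arcs p (fun x => x = v),
        countP_tail_sub_dropLast p _ hh hl]
      simp
    set F₂ := F \ T with hF₂
    have hC₂ : Conserv F₂ s t := by
      intro v hvs hvt
      have h1 := key v
      rw [if_neg (fun h => hvt h.symm), if_neg (fun h => hvs h.symm)] at h1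
      have h2 : ind F v = outd F v := hC v hvs hvt
      have h3 : ind T v ≤ ind F v := ind_mono hTF v
      have h4 : outd T v ≤ outd F v := outd_mono hTF v
      rw [hF₂, ind_sdiff hTF, outd_sdiff hTF]
      omega
    have hval₂ : valF F₂ s = k := by
      have h1 := key s
      rw [if_neg (fun h => hst h.symm), if_pos rfl] at h1
      have h3 : ind T s ≤ ind F s := ind_mono hTF s
      have h4 : outd T s ≤ outd F s := outd_mono hTF s
      unfold valF at hval ⊢
      rw [hF₂, ind_sdiff hTF, outd_sdiff hTF]
      omega
    obtain ⟨P₂, hcard, hdisj, hmem⟩ := ih F₂ hC₂ hval₂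
    have harcsqT : ∀ a ∈ arcs q, a ∈ T := fun a ha => List.mem_toFinset.2 (hq5 a ha)
    have harcsq_ne : arcs q ≠ [] := by
      rcases q with _ | ⟨x, m⟩
      · exact absurd rfl hq0
      rcases m with _ | ⟨y, m'⟩
      · exfalso
        have h1 : x = s := by have := hq1.trans hh; simpa using this
        have h2 : x = t := by have := hq2.trans hl; simpa using this
        exact hst (h1 ▸ h2 ▸ rfl)
      · rw [arcs_cons]; simp
    obtain ⟨a0, ha0⟩ := List.exists_mem_of_ne_nil _ harcsq_ne
    have hqnotin : q ∉ P₂ := by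
      intro hq
      have h1 := (hmem q hq).2.2.2 a0 ha0
      rw [hF₂, Finset.mem_sdiff] at h1
      exact h1.2 (harcsqT a0 ha0)
    refine ⟨insert q P₂, ?_, ?_, ?_⟩
    · rw [Finset.card_insert_of_notMem hqnotin, hcard]
    · intro p1 hp1 p2 hp2 hne a hap1 hap2
      rcases Finset.mem_insert.1 hp1 with rfl | hp1' <;>
        rcases Finset.mem_insert.1 hp2 with h | hp2'
      · exact hne h.symm
      · have h1 := (hmem p2 hp2').2.2.2 a hap2
        rw [hF₂, Finset.mem_sdiff] at h1
        exact h1.2 (harcsqT a hap1)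
      · subst h
        have h1 := (hmem p1 hp1').2.2.2 a hap1
        rw [hF₂, Finset.mem_sdiff] at h1
        exact h1.2 (harcsqT a hap2)
      · exact hdisj p1 hp1' p2 hp2' hne a hap1 hap2
    · intro r hr
      rcases Finset.mem_insert.1 hr with rfl | hr'
      · exact ⟨hq1.trans hh, hq2.trans hl, hq3, fun a ha => hTF (harcsqT a ha)⟩
      · obtain ⟨m1, m2, m3, m4⟩ := hmem r hr'
        exact ⟨m1, m2, m3, fun a ha => (Finset.sdiff_subset) (hF₂ ▸ m4 a ha)⟩

end Decomp

section Augment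
variable [DecidableEq V]

theorem augment {A F : Finset (V × V)} {s t : V} (hst : s ≠ t)
    (hFA : F ⊆ A) {p : List V}
    (hh : p.head? = some s) (hl : p.getLast? = some t) (hnd : p.Nodup)
    (hsub : ∀ a ∈ arcs p, a ∈ (A \ F) ∪ F.image Prod.swap) :
    ∃ F' : Finset (V × V), F' ⊆ A ∧
      (∀ v, (ind F' v : ℤ) - outd F' v
        = (ind F v : ℤ) - outd F v + (if t = v then 1 else 0) - (if s = v then 1 else 0)) := by
  have hand : (arcs p).Nodup := arcs_nodup hnd
  set Pa := (arcs p).toFinset with hPadef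
  set Fwd := Pa ∩ (A \ F) with hFwd
  set D := Pa \ (A \ F) with hD
  set Bwd := D.image Prod.swap with hBwd
  have hBwdF : Bwd ⊆ F := by
    intro b hb
    rw [hBwd, Finset.mem_image] at hb
    obtain ⟨a, ha, rfl⟩ := hb
    rw [hD, Finset.mem_sdiff] at ha
    have := hsub a (List.mem_toFinset.1 ha.1)
    rcases Finset.mem_union.1 this with h | h
    · exact absurd h ha.2
    · rw [Finset.mem_image] at h
      obtain ⟨c, hc, rfl⟩ := h
      rwa [Prod.swap_swap]
  have hFwdA : Fwd ⊆ A \ F := by rw [hFwd]; exact Finset.inter_subset_right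
  have hFwdFdisj : Disjoint Fwd F := by
    refine Finset.disjoint_left.2 fun a ha haF => ?_
    exact (Finset.mem_sdiff.1 (hFwdA ha)).2 haF
  have hdisj1 : Disjoint (F \ Bwd) Fwd :=
    (Finset.disjoint_of_subset_left (Finset.sdiff_subset) hFwdFdisj.symm)
  have hFwdD : Disjoint Fwd D := by
    refine Finset.disjoint_left.2 fun a ha haD => ?_
    exact (Finset.mem_sdiff.1 haD).2 (hFwdA ha)
  have hPaU : Fwd ∪ D = Pa := by
    rw [hFwd, hD]
    ext a
    simp only [Finset.mem_union, Finset.mem_inter, Finset.mem_sdiff]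
    tauto
  refine ⟨(F \ Bwd) ∪ Fwd, ?_, ?_⟩
  · intro a ha
    rcases Finset.mem_union.1 ha with h | h
    · exact hFA (Finset.sdiff_subset h)
    · exact (Finset.mem_sdiff.1 (hFwdA h)).1
  · intro v
    have e1 : outd ((F \ Bwd) ∪ Fwd) v = outd (F \ Bwd) v + outd Fwd v := outd_union hdisj1 v
    have e2 : ind ((F \ Bwd) ∪ Fwd) v = ind (F \ Bwd) v + ind Fwd v := ind_union hdisj1 v
    have e3 : outd (F \ Bwd) v = outd F v - outd Bwd v := outd_sdiff hBwdF v
    have e4 : ind (F \ Bwd) v = ind F v - ind Bwd v := ind_sdiff hBwdF v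
    have e5 : outd Bwd v = ind D v := by rw [hBwd]; exact outd_image_swap D v
    have e6 : ind Bwd v = outd D v := by rw [hBwd]; exact ind_image_swap D v
    have e7 : outd Bwd v ≤ outd F v := outd_mono hBwdF v
    have e8 : ind Bwd v ≤ ind F v := ind_mono hBwdF v
    have e9 : outd Pa v = outd Fwd v + outd D v := by rw [← hPaU]; exact outd_union hFwdD v
    have e10 : ind Pa v = ind Fwd v + ind D v := by rw [← hPaU]; exact ind_union hFwdD v
    have key : (ind Pa v : ℤ) - outd Pa v
        = (if t = v then 1 else 0) - (if s = v then 1 else 0) := by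
      rw [hPadef, ind_toFinset hand v, outd_toFinset hand v,
        countP_snd_arcs p (fun x => x = v), countP_fst_arcs p (fun x => x = v),
        countP_tail_sub_dropLast p _ hh hl]
      simp
    omega

end Augment

section Main
variable [Fintype V] [DecidableEq V]

theorem flowValue_cut {A : Finset (V × V)} {b : V × V → ℝ} {s t : V} {f : V × V → ℝ}
    (hf : IsFlow A b s t f) (S : Finset V) (hs : s ∈ S) (ht : t ∉ S) :
    flowValue s f = (∑ v ∈ S, ∑ u ∈ Sᶜ, f (v, u)) - (∑ v ∈ S, ∑ u ∈ Sᶜ, f (u, v)) := by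
  have h1 : flowValue s f = ∑ v ∈ S, ((∑ u, f (v, u)) - (∑ u, f (u, v))) := by
    rw [Finset.sum_eq_single_of_mem s hs
      (fun v hv hvs => by rw [hf.conserve v hvs (fun h => ht (h ▸ hv))]; ring)]
    rfl
  have h2 : ∑ v ∈ S, (∑ u, f (v, u)) = (∑ v ∈ S, ∑ u ∈ S, f (v, u)) + ∑ v ∈ S, ∑ u ∈ Sᶜ, f (v, u) := by
    rw [← Finset.sum_add_distrib]
    exact Finset.sum_congr rfl fun v _ => (Finset.sum_add_sum_compl S _).symm
  have h3 : ∑ v ∈ S, (∑ u, f (u, v)) = (∑ v ∈ S, ∑ u ∈ S, f (u, v)) + ∑ v ∈ S, ∑ u ∈ Sᶜ, f (u, v) := by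
    rw [← Finset.sum_add_distrib]
    exact Finset.sum_congr rfl fun v _ => (Finset.sum_add_sum_compl S _).symm
  have hcomm : (∑ v ∈ S, ∑ u ∈ S, f (v, u)) = ∑ v ∈ S, ∑ u ∈ S, f (u, v) :=
    Finset.sum_comm
  rw [h1, Finset.sum_sub_distrib, h2, h3, hcomm]
  ring

theorem stmt5' (A : Finset (V × V)) (b : V × V → ℝ)
    (hb : ∀ a ∈ A, b a = 1) (s t : V) (hst : s ≠ t) (k : ℕ)
    (hmax : maxFlow A b s t = k) :
    ∃ P : Finset (List V), (∀ p ∈ P, IsPath A s t p) ∧ ArcDisjoint P ∧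
      P.card = k := by
  classical
  -- a value-maximal integral flow
  set 𝒮 : Finset (Finset (V × V)) := A.powerset.filter (fun F => Conserv F s t) with h𝒮
  have hemp : ∅ ∈ 𝒮 := by
    rw [h𝒮, Finset.mem_filter]
    refine ⟨Finset.mem_powerset.2 (Finset.empty_subset A), ?_⟩
    intro v _ _
    simp [ind, outd]
  obtain ⟨F, hF𝒮, hFmax⟩ := Finset.exists_max_image 𝒮 (fun F => valF F s) ⟨∅, hemp⟩
  rw [h𝒮, Finset.mem_filter, Finset.mem_powerset] at hF𝒮
  obtain ⟨hFA, hC⟩ := hF𝒮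
  -- residual arcs and reachable set
  set R : Finset (V × V) := (A \ F) ∪ F.image Prod.swap with hR
  set S : Finset V := Finset.univ.filter (fun v => Reach R s v) with hS
  have hs : s ∈ S := by rw [hS, Finset.mem_filter]; exact ⟨Finset.mem_univ _, reach_self R s⟩
  have ht : t ∉ S := by
    rw [hS, Finset.mem_filter]
    rintro ⟨-, hp⟩
    obtain ⟨p, hh, hl, hnd, hsub⟩ := hp
    obtain ⟨F', hF'A, hdelta⟩ := augment hst hFA hh hl hnd (fun a ha => by
      have := hsub a ha; rwa [hR] at this)
    have hC' : Conserv F' s t := by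
      intro v hvs hvt
      have h1 := hdelta v
      rw [if_neg (fun h => hvt h.symm), if_neg (fun h => hvs h.symm)] at h1
      have h2 : ind F v = outd F v := hC v hvs hvt
      omega
    have hval' : valF F' s = valF F s + 1 := by
      have h1 := hdelta s
      rw [if_neg (fun h => hst h.symm), if_pos rfl] at h1
      unfold valF
      omega
    have hmem' : F' ∈ 𝒮 := by
      rw [h𝒮, Finset.mem_filter]
      exact ⟨Finset.mem_powerset.2 hF'A, hC'⟩
    have := hFmax F' hmem'
    omega
  -- crossing facts
  have hreach_mem : ∀ v, v ∈ S ↔ Reach R s v := by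
    intro v; rw [hS, Finset.mem_filter]; simp
  have hcross1 : ∀ v u, v ∈ S → u ∉ S → (v, u) ∈ A → (v, u) ∈ F := by
    intro v u hv hu hA
    by_contra hF
    have : (v, u) ∈ R := by rw [hR]; exact Finset.mem_union_left _ (Finset.mem_sdiff.2 ⟨hA, hF⟩)
    exact hu ((hreach_mem u).2 (reach_step ((hreach_mem v).1 hv) this))
  have hcross2 : ∀ v u, v ∈ S → u ∉ S → (u, v) ∉ F := by
    intro v u hv hu hF
    have : (v, u) ∈ R := by
      rw [hR]
      exact Finset.mem_union_right _ (Finset.mem_image.2 ⟨(u, v), hF, rfl⟩)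
    exact hu ((hreach_mem u).2 (reach_step ((hreach_mem v).1 hv) this))
  -- the integral flow is maximum
  have hflowF : IsFlow A b s t (flowOf F) := isFlow_flowOf hb hFA hC
  set M : ℝ := flowValue s (flowOf F) with hM
  have hub : ∀ f : V × V → ℝ, IsFlow A b s t f → flowValue s f ≤ M := by
    intro f hf
    rw [flowValue_cut hf S hs ht, hM, flowValue_cut hflowF S hs ht]
    have hz : (∑ v ∈ S, ∑ u ∈ Sᶜ, flowOf F (u, v)) = 0 := by
      apply Finset.sum_eq_zero
      intro v hv
      apply Finset.sum_eq_zero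
      intro u hu
      rw [Finset.mem_compl] at hu
      unfold flowOf
      rw [if_neg (hcross2 v u hv hu)]
    have hle : (∑ v ∈ S, ∑ u ∈ Sᶜ, f (v, u)) ≤ ∑ v ∈ S, ∑ u ∈ Sᶜ, flowOf F (v, u) := by
      apply Finset.sum_le_sum
      intro v hv
      apply Finset.sum_le_sum
      intro u hu
      rw [Finset.mem_compl] at hu
      by_cases hA : (v, u) ∈ A
      · have h1 := hf.cap _ hA
        rw [hb _ hA] at h1
        unfold flowOf
        rw [if_pos (hcross1 v u hv hu hA)]
        exact h1
      · rw [hf.support _ hA]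
        exact hflowF.nonneg _
    have hpos : 0 ≤ ∑ v ∈ S, ∑ u ∈ Sᶜ, f (u, v) :=
      Finset.sum_nonneg fun v _ => Finset.sum_nonneg fun u _ => hf.nonneg _
    linarith
  have hgreat : IsGreatest {x | ∃ f, IsFlow A b s t f ∧ flowValue s f = x} M :=
    ⟨⟨flowOf F, hflowF, rfl⟩, by rintro x ⟨f, hf, rfl⟩; exact hub f hf⟩
  have hMF : maxFlow A b s t = M := hgreat.csSup_eq
  have hvalk : valF F s = (k : ℤ) := by
    have : (valF F s : ℝ) = (k : ℝ) := by
      rw [← flowValue_flowOf, ← hM, ← hMF, hmax]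
    exact_mod_cast this
  obtain ⟨P, hcard, hdisj, hmem⟩ := decomp hst k F hC hvalk
  refine ⟨P, ?_, hdisj, hcard⟩
  intro p hp
  obtain ⟨m1, m2, m3, m4⟩ := hmem p hp
  exact ⟨m1, m2, m3, fun a ha => hFA (m4 a ha)⟩

end Main

/-- Menger, flow-decomposition form: with unit capacities, a
max-flow of value `k` yields `k` pairwise arc-disjoint simple `s`-`t` paths. -/
theorem stmt5 [Fintype V] [DecidableEq V] (A : Finset (V × V)) (b : V × V → ℝ)
    (hb : ∀ a ∈ A, b a = 1) (s t : V) (hst : s ≠ t) (k : ℕ)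
    (hmax : maxFlow A b s t = k) :
    ∃ P : Finset (List V), (∀ p ∈ P, IsPath A s t p) ∧ ArcDisjoint P ∧
      P.card = k := by
  exact stmt5' A b hb s t hst k hmax
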